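/- Let D be an oriented knot diagram with n ≥ 1 crossings, modeled by a Gauss code g, and let −D be the diagram D with the orientation reversed. Then X_{−D}(t) = t^(n−1) · X_D(t⁻¹); that is, for every k with 0 ≤ k ≤ n−1, the coefficient of t^k in X_{−D}(t) equals the coefficient of t^(n−1−k) in X_D(t) (X_{−D} is the reflection of X_D at degree n−1). -/

import Mathlib

/-!
Reversing the orientation sends the passages of crossing `c` from positions `o c`, `u c` to
`-o c`, `-u c`. Measured from the base point `o c`, the offsets of the passages of every other
crossing are nonzero, and negation `x ↦ 2n - x` reverses their order. Hence each of the other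
`n - 1` crossings is warped from `o c` in exactly one of `D` and `-D`, so the two warping degrees
at `o c` add up to `n - 1`, crossing by crossing.
-/

open Polynomial Finset

/-- An oriented knot diagram with `n` crossings, modeled by its oriented Gauss code. -/
structure GaussCode (n : ℕ) where
  g : ZMod (2 * n) → Fin n × Bool
  o : Fin n → ZMod (2 * n)
  u : Fin n → ZMod (2 * n)
  over_iff : ∀ (c : Fin n) (e : ZMod (2 * n)), g e = (c, true) ↔ e = o c
  under_iff : ∀ (c : Fin n) (e : ZMod (2 * n)), g e = (c, false) ↔ e = u c

namespace GaussCode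

variable {n : ℕ}

/-- The warping degree of the base position `e`: the number of crossings whose
under-passage occurs strictly before its over-passage when traversing the diagram
starting at `e`. -/
def d (D : GaussCode n) (e : ZMod (2 * n)) : ℕ :=
  (Finset.univ.filter fun c : Fin n => (D.u c - e).val < (D.o c - e).val).card

/-- The warping crossing polynomial. -/
noncomputable def Xpoly (D : GaussCode n) : Polynomial ℤ :=
  ∑ c : Fin n, Polynomial.X ^ D.d (D.o c)

/-- The warping polynomial. -/
noncomputable def Wpoly (D : GaussCode n) : Polynomial ℤ :=
  ∑ k ∈ Finset.range (2 * n), Polynomial.X ^ D.d (k : ZMod (2 * n))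

/-- The warping degree of the diagram: minimum over all base positions. -/
noncomputable def wdeg (D : GaussCode n) : ℕ :=
  sInf (Set.range fun e : ZMod (2 * n) => D.d e)

/-- The diagram is alternating. -/
def Alternating (D : GaussCode n) : Prop :=
  ∀ e : ZMod (2 * n), (D.g e).2 ≠ (D.g (e + 1)).2

end GaussCode

theorem ZMod.val_neg_lt_val_neg_iff {m : ℕ} [NeZero m] {x y : ZMod m} (hx : x ≠ 0)
    (hy : y ≠ 0) : (-x).val < (-y).val ↔ y.val < x.val := by
  rw [ZMod.neg_val, ZMod.neg_val, if_neg hx, if_neg hy]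
  have := x.val_lt
  have := y.val_lt
  omega

namespace GaussCode

variable {n : ℕ} (D : GaussCode n)

def underFirst (e : ZMod (2 * n)) : Finset (Fin n) :=
  univ.filter fun c => (D.u c - e).val < (D.o c - e).val

theorem d_eq_card_underFirst (e : ZMod (2 * n)) : D.d e = (D.underFirst e).card := rfl

theorem g_o (c : Fin n) : D.g (D.o c) = (c, true) := (D.over_iff c _).mpr rfl

theorem g_u (c : Fin n) : D.g (D.u c) = (c, false) := (D.under_iff c _).mpr rfl

theorem o_injective : Function.Injective D.o := fun c c' hcc' => by
  simpa using (D.g_o c).symm.trans ((congrArg D.g hcc').trans (D.g_o c'))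

theorem u_ne_o (c c' : Fin n) : D.u c ≠ D.o c' := fun hcc' => by
  simpa using (D.g_u c).symm.trans ((congrArg D.g hcc').trans (D.g_o c'))

theorem underFirst_o_subset_erase (c : Fin n) : D.underFirst (D.o c) ⊆ univ.erase c := by
  intro c' hc'
  refine mem_erase.mpr ⟨?_, mem_univ _⟩
  rintro rfl
  simp [underFirst] at hc'

theorem d_o_le (c : Fin n) : D.d (D.o c) ≤ n - 1 := by
  rw [d_eq_card_underFirst]
  simpa using card_le_card (D.underFirst_o_subset_erase c)

section Reverse

variable {D} {Dm : GaussCode n} (h : ∀ e, Dm.g e = D.g (-e))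
include h

theorem o_of_reverse (c : Fin n) : Dm.o c = -D.o c :=
  ((Dm.over_iff c _).mp (by rw [h, neg_neg, g_o])).symm

theorem u_of_reverse (c : Fin n) : Dm.u c = -D.u c :=
  ((Dm.under_iff c _).mp (by rw [h, neg_neg, g_u])).symm

theorem mem_underFirst_o_of_reverse_iff {c c' : Fin n} (hc' : c' ≠ c) :
    c' ∈ Dm.underFirst (Dm.o c) ↔ c' ∉ D.underFirst (D.o c) := by
  have : NeZero (2 * n) := ⟨by have := c.pos; omega⟩
  have hu : D.u c' - D.o c ≠ 0 := sub_ne_zero.mpr (D.u_ne_o c' c)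
  have ho : D.o c' - D.o c ≠ 0 := sub_ne_zero.mpr (D.o_injective.ne hc')
  have huo : (D.u c' - D.o c).val ≠ (D.o c' - D.o c).val := fun heq =>
    D.u_ne_o c' c' (sub_left_inj.mp (ZMod.val_injective _ heq))
  simp only [underFirst, mem_filter, mem_univ, true_and, o_of_reverse h, u_of_reverse h,
    ← neg_sub', ZMod.val_neg_lt_val_neg_iff hu ho]
  omega

theorem underFirst_o_of_reverse (c : Fin n) :
    Dm.underFirst (Dm.o c) = univ.erase c \ D.underFirst (D.o c) := by
  ext c'
  rcases eq_or_ne c' c with rfl | hc'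
  · simp [underFirst]
  · simp [mem_underFirst_o_of_reverse_iff h hc', hc']

theorem d_o_of_reverse (c : Fin n) : Dm.d (Dm.o c) = n - 1 - D.d (D.o c) := by
  rw [d_eq_card_underFirst, underFirst_o_of_reverse h,
    card_sdiff_of_subset (D.underFirst_o_subset_erase c)]
  simp [d_eq_card_underFirst]

end Reverse

end GaussCode

theorem Xpoly_reverse_orientation_general
    (n : ℕ) (D Dm : GaussCode n)
    (h : ∀ e : ZMod (2 * n), Dm.g e = D.g (-e)) :
    ∀ k : ℕ, k ≤ n - 1 → Dm.Xpoly.coeff k = D.Xpoly.coeff (n - 1 - k) := by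
  intro k hk
  simp only [GaussCode.Xpoly, finsetSum_coeff, coeff_X_pow, GaussCode.d_o_of_reverse h]
  refine sum_congr rfl fun c _ => if_congr ?_ rfl rfl
  have := D.d_o_le c
  omega

/-- The warping crossing polynomial of the orientation-reversed diagram `−D` is the
reflection of that of `D` at degree `n − 1`: `X_{−D}(t) = t^(n−1) X_D(t⁻¹)`. -/
theorem Xpoly_reverse_orientation
    (n : ℕ) (hn : 1 ≤ n) (D Dm : GaussCode n)
    (h : ∀ e : ZMod (2 * n), Dm.g e = D.g (-e)) :
    ∀ k : ℕ, k ≤ n - 1 → Dm.Xpoly.coeff k = D.Xpoly.coeff (n - 1 - k) :=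
  Xpoly_reverse_orientation_general n D Dm h
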